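/- Let w(x) = 256x⁴ − 80x³ − 32x² − 20x + 1. Then w(x²) and w(x⁴) are irreducible over ℚ. -/

import Mathlib

/-!
Modulo 7, `w(x⁴)` is a product of two irreducible octics, and modulo 17 a product of irreducible
factors of degrees 4 and 12. The leading coefficient 256 is a unit modulo both primes, so a
factor of `w(x⁴)` over `ℤ` keeps its degree after reduction; that degree therefore lies in
`{0, 8, 16} ∩ {0, 4, 12, 16}`. As `w(x⁴)` is primitive, it is irreducible over `ℤ`, hence over
`ℚ` by Gauss's lemma, and a factorisation `w(x²) = g h` would give `w(x⁴) = g(x²) h(x²)`.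

Irreducibility over `𝔽_p` is certified by a Rabin-type test: an irreducible factor of degree `d`
divides `X ^ p ^ e - X` whenever `d ∣ e`, so a polynomial of degree `n` is irreducible once it is
coprime to `X ^ p ^ e - X` for enough exponents `e` that every `d ≤ n / 2` divides one of them.
The residues of `X ^ p ^ e` are computed by repeated squaring; each step is a polynomial identity
in characteristic `p`.
-/

open Polynomial

namespace Polynomial

section PowerResidues

variable {R : Type*} [CommRing R] {f : R[X]}

theorem dvd_X_pow_add_sub_of_dvd {s t n : ℕ} {u v r : R[X]} (hu : f ∣ X ^ s - u)
    (hv : f ∣ X ^ t - v) (q : R[X]) (h : u * v = f * q + r) (hn : s + t = n := by norm_num) :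
    f ∣ X ^ n - r := by
  have key : X ^ n - r = (X ^ s - u) * X ^ t + u * (X ^ t - v) + f * q := by
    rw [← hn, pow_add]; linear_combination h
  rw [key]
  exact dvd_add (dvd_add (dvd_mul_of_dvd_left hu _) (dvd_mul_of_dvd_right hv _)) (dvd_mul_right _ _)

theorem isCoprime_X_pow_sub_X_of_dvd {n : ℕ} {r : R[X]} (h : f ∣ X ^ n - r) (a b : R[X])
    (hab : a * f + b * (r - X) = 1) : IsCoprime f (X ^ n - X) := by
  obtain ⟨c, hc⟩ := h
  rw [show (X : R[X]) ^ n - X = r - X + f * c by linear_combination hc]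
  exact IsCoprime.add_mul_left_right ⟨a, b, hab⟩ c

end PowerResidues

theorem irreducible_of_isCoprime_X_pow_card_pow_sub_X {K : Type*} [Field K] [Finite K]
    {f : K[X]} {n : ℕ} (hf : f.natDegree = n) (hn : 0 < n) (S : Finset ℕ)
    (hS : ∀ d ∈ Finset.Icc 1 (n / 2), ∃ e ∈ S, d ∣ e)
    (hcop : ∀ e ∈ S, IsCoprime f (X ^ Nat.card K ^ e - X)) : Irreducible f := by
  subst hf
  have hf0 : f ≠ 0 := ne_zero_of_natDegree_gt hn
  rw [irreducible_iff_degree_lt f hf0 (not_isUnit_of_natDegree_pos f hn)]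
  intro g hg hgf
  by_contra hgu
  have hg0 : g ≠ 0 := ne_zero_of_dvd_ne_zero hf0 hgf
  obtain ⟨P, hP, hPg⟩ := WfDvdMonoid.exists_irreducible_factor hgu hg0
  have hPdeg : P.natDegree ≤ f.natDegree / 2 :=
    (natDegree_le_of_dvd hPg hg0).trans (natDegree_le_of_degree_le hg)
  obtain ⟨e, he, hde⟩ := hS P.natDegree (Finset.mem_Icc.mpr ⟨hP.natDegree_pos, hPdeg⟩)
  exact hP.not_isUnit ((hcop e he).isUnit_of_dvd' (hPg.trans hgf)
    (hP.natDegree_dvd_iff_dvd_X_pow_card_pow_sub_X.mp hde))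

/-- Primality is an explicit hypothesis, not a `Fact` instance, so that `ZMod p` enters the
statement only through `ZMod.commRing`: under the field instance, unifying the certificates below
with it would unfold their large powers of `X`. -/
theorem irreducible_of_isCoprime_X_pow_pow_sub_X {p : ℕ} (hp : p.Prime) {f : (ZMod p)[X]}
    {n : ℕ} (hf : f.natDegree = n) (hn : 0 < n) (S : Finset ℕ)
    (hS : ∀ d ∈ Finset.Icc 1 (n / 2), ∃ e ∈ S, d ∣ e)
    (hcop : ∀ e ∈ S, IsCoprime f (X ^ p ^ e - X)) : Irreducible f :=
  have : Fact p.Prime := ⟨hp⟩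
  irreducible_of_isCoprime_X_pow_card_pow_sub_X hf hn S hS (by simpa only [Nat.card_zmod])

theorem natDegree_eq_of_dvd_mul_of_irreducible {K : Type*} [Field K] {A B g : K[X]}
    (hA : Irreducible A) (hB : Irreducible B) (hg : g ∣ A * B) :
    g.natDegree = 0 ∨ g.natDegree = A.natDegree ∨ g.natDegree = B.natDegree ∨
      g.natDegree = A.natDegree + B.natDegree := by
  obtain ⟨a, b, ha, hb, rfl⟩ := exists_dvd_and_dvd_of_dvd_mul hg
  have natDegree_of_dvd {a P : K[X]} (hP : Irreducible P) (ha : a ∣ P) :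
      a.natDegree = 0 ∨ a.natDegree = P.natDegree := by
    rcases hP.dvd_iff.mp ha with h | h
    · exact Or.inl (natDegree_eq_zero_of_isUnit h)
    · exact Or.inr (natDegree_eq_of_degree_eq (degree_eq_degree_of_associated h.symm))
  have ha0 : a ≠ 0 := ne_zero_of_dvd_ne_zero hA.ne_zero ha
  have hb0 : b ≠ 0 := ne_zero_of_dvd_ne_zero hB.ne_zero hb
  rw [natDegree_mul ha0 hb0]
  rcases natDegree_of_dvd hA ha with h | h <;> rcases natDegree_of_dvd hB hb with h' | h' <;>
    simp [h, h']

theorem natDegree_eq_of_dvd_of_map_eq_mul {R K : Type*} [Semiring R] [NoZeroDivisors R]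
    [Field K] (φ : R →+* K) {f g : R[X]} {A B : K[X]} (hA : Irreducible A) (hB : Irreducible B)
    (hf : f.map φ = A * B) (hlc : φ f.leadingCoeff ≠ 0) (hg : g ∣ f) :
    g.natDegree = 0 ∨ g.natDegree = A.natDegree ∨ g.natDegree = B.natDegree ∨
      g.natDegree = A.natDegree + B.natDegree := by
  obtain ⟨h, rfl⟩ := hg
  have hglc : φ g.leadingCoeff ≠ 0 := by
    rw [leadingCoeff_mul, map_mul] at hlc
    exact left_ne_zero_of_mul hlc
  rw [← natDegree_map_of_leadingCoeff_ne_zero φ hglc]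
  exact natDegree_eq_of_dvd_mul_of_irreducible hA hB
    (hf ▸ Polynomial.map_dvd φ (dvd_mul_right g h))

theorem IsPrimitive.irreducible_of_forall_dvd {R : Type*} [CommSemiring R] [NoZeroDivisors R]
    {f : R[X]} (hf : f.IsPrimitive) (hdeg : 0 < f.natDegree)
    (h : ∀ g, g ∣ f → g.natDegree = 0 ∨ g.natDegree = f.natDegree) : Irreducible f := by
  have isUnit_of_natDegree_eq_zero {g : R[X]} (hg : g ∣ f) (h0 : g.natDegree = 0) : IsUnit g := by
    rw [eq_C_of_natDegree_eq_zero h0] at hg ⊢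
    exact isUnit_C.mpr (hf _ hg)
  refine ⟨not_isUnit_of_natDegree_pos f hdeg, fun a b hab => ?_⟩
  have hab0 : a ≠ 0 ∧ b ≠ 0 := mul_ne_zero_iff.mp (hab ▸ ne_zero_of_natDegree_gt hdeg)
  have hdeg_ab : a.natDegree + b.natDegree = f.natDegree := by
    rw [hab, natDegree_mul hab0.1 hab0.2]
  rcases h a (hab ▸ dvd_mul_right a b) with ha | ha
  · exact Or.inl (isUnit_of_natDegree_eq_zero (hab ▸ dvd_mul_right a b) ha)
  · exact Or.inr (isUnit_of_natDegree_eq_zero (hab ▸ dvd_mul_left b a) (by omega))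

theorem isPrimitive_of_isUnit_coeff {R : Type*} [CommSemiring R] {f : R[X]} {n : ℕ}
    (h : IsUnit (f.coeff n)) : f.IsPrimitive := fun r ⟨g, hg⟩ =>
  isUnit_of_dvd_unit ⟨g.coeff n, by rw [hg, coeff_C_mul]⟩ h

theorem irreducible_of_irreducible_comp {K : Type*} [Field K] {f q : K[X]}
    (h : Irreducible (f.comp q)) (hq : 0 < q.natDegree) : Irreducible f := by
  have isUnit_of_comp {g : K[X]} (hg : IsUnit (g.comp q)) : IsUnit g := by
    have hg0 : g ≠ 0 := by rintro rfl; simp at hg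
    have := natDegree_eq_zero_of_isUnit hg
    rw [natDegree_comp, mul_eq_zero, or_iff_left hq.ne'] at this
    rw [isUnit_iff_degree_eq_zero, degree_eq_natDegree hg0, this, Nat.cast_zero]
  refine ⟨fun hf => h.not_isUnit ?_, fun a b hab => ?_⟩
  · obtain ⟨c, hc, rfl⟩ := Polynomial.isUnit_iff.mp hf
    simpa using hc
  · rw [hab, mul_comp] at h
    exact (h.isUnit_or_isUnit rfl).imp isUnit_of_comp isUnit_of_comp

end Polynomial

local notation "A₇" => (-3 * X ^ 8 + 2 * X ^ 4 + 3 : (ZMod 7)[X])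
local notation "B₇" => (X ^ 8 - 3 * X ^ 4 - 2 : (ZMod 7)[X])
local notation "A₁₇" => (X ^ 4 - 6 : (ZMod 17)[X])
local notation "B₁₇" => (X ^ 12 - 6 * X ^ 8 - 3 : (ZMod 17)[X])

theorem natDegree_A₇ : natDegree A₇ = 8 := by
  compute_degree!

theorem irreducible_A₇ : Irreducible A₇ := by
  have e1 : A₇ ∣ X ^ 7 - X ^ 7 := Dvd.intro 0 ?_
  have h2 : A₇ ∣ X ^ (2 * 7) - (3 * X ^ 6 + 3 * X ^ 2) :=
    dvd_X_pow_add_sub_of_dvd e1 e1 (2 * X ^ 6 - X ^ 2) ?_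
  have h3 : A₇ ∣ X ^ (3 * 7) - (-3 * X ^ 5 - 2 * X) :=
    dvd_X_pow_add_sub_of_dvd h2 e1 (-X ^ 5 + 3 * X) ?_
  have h6 : A₇ ∣ X ^ (6 * 7) - (-3 * X ^ 6 - X ^ 2) :=
    dvd_X_pow_add_sub_of_dvd h3 h3 (-3 * X ^ 2) ?_
  have e2 : A₇ ∣ X ^ 7 ^ 2 - (2 * X ^ 5 - 3 * X) :=
    dvd_X_pow_add_sub_of_dvd h6 e1 (X ^ 5 + X) ?_
  have h2 : A₇ ∣ X ^ (2 * 7 ^ 2) - (-X ^ 2) :=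
    dvd_X_pow_add_sub_of_dvd e2 e2 (X ^ 2) ?_
  have h3 : A₇ ∣ X ^ (3 * 7 ^ 2) - (-2 * X ^ 7 + 3 * X ^ 3) :=
    dvd_X_pow_add_sub_of_dvd h2 e2 0 ?_
  have h6 : A₇ ∣ X ^ (6 * 7 ^ 2) - (-X ^ 6) :=
    dvd_X_pow_add_sub_of_dvd h3 h3 (X ^ 6) ?_
  have e3 : A₇ ∣ X ^ 7 ^ 3 - (-3 * X ^ 7 - 2 * X ^ 3) :=
    dvd_X_pow_add_sub_of_dvd h6 e2 (3 * X ^ 3) ?_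
  have h2 : A₇ ∣ X ^ (2 * 7 ^ 3) - (-3 * X ^ 6 - 3 * X ^ 2) :=
    dvd_X_pow_add_sub_of_dvd e3 e3 (-3 * X ^ 6 + X ^ 2) ?_
  have h3 : A₇ ∣ X ^ (3 * 7 ^ 3) - X ^ 5 :=
    dvd_X_pow_add_sub_of_dvd h2 e3 (-3 * X ^ 5) ?_
  have h6 : A₇ ∣ X ^ (6 * 7 ^ 3) - (3 * X ^ 6 + X ^ 2) :=
    dvd_X_pow_add_sub_of_dvd h3 h3 (2 * X ^ 2) ?_
  have e4 : A₇ ∣ X ^ 7 ^ 4 - (-X) :=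
    dvd_X_pow_add_sub_of_dvd h6 e3 (3 * X ^ 5 - 2 * X) ?_
  refine irreducible_of_isCoprime_X_pow_pow_sub_X (by norm_num) natDegree_A₇ (by norm_num)
    {3, 4} (by decide) ?_
  simp only [Finset.mem_insert, Finset.mem_singleton, forall_eq_or_imp, forall_eq]
  refine ⟨isCoprime_X_pow_sub_X_of_dvd e3 (-X ^ 6 + X ^ 4 + X ^ 2 - 2) (X ^ 7 - X ^ 5 + 3 * X) ?_,
    isCoprime_X_pow_sub_X_of_dvd e4 (-2) (3 * X ^ 7 - 2 * X ^ 3) ?_⟩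
  all_goals rw [← sub_eq_zero]; ring_nf <;> reduce_mod_char

theorem natDegree_B₇ : natDegree B₇ = 8 := by
  compute_degree!

theorem irreducible_B₇ : Irreducible B₇ := by
  have e1 : B₇ ∣ X ^ 7 - X ^ 7 := Dvd.intro 0 ?_
  have h2 : B₇ ∣ X ^ (2 * 7) - (-3 * X ^ 6 - X ^ 2) :=
    dvd_X_pow_add_sub_of_dvd e1 e1 (X ^ 6 + 3 * X ^ 2) ?_
  have h3 : B₇ ∣ X ^ (3 * 7) - (-X ^ 5 + X) :=
    dvd_X_pow_add_sub_of_dvd h2 e1 (-3 * X ^ 5 - 3 * X) ?_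
  have h6 : B₇ ∣ X ^ (6 * 7) - (X ^ 6 + 3 * X ^ 2) :=
    dvd_X_pow_add_sub_of_dvd h3 h3 (X ^ 2) ?_
  have e2 : B₇ ∣ X ^ 7 ^ 2 - (-X ^ 5 - 2 * X) :=
    dvd_X_pow_add_sub_of_dvd h6 e1 (X ^ 5 - X) ?_
  have h2 : B₇ ∣ X ^ (2 * 7 ^ 2) - (-X ^ 2) :=
    dvd_X_pow_add_sub_of_dvd e2 e2 (X ^ 2) ?_
  have h3 : B₇ ∣ X ^ (3 * 7 ^ 2) - (X ^ 7 + 2 * X ^ 3) :=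
    dvd_X_pow_add_sub_of_dvd h2 e2 0 ?_
  have h6 : B₇ ∣ X ^ (6 * 7 ^ 2) - (-X ^ 6) :=
    dvd_X_pow_add_sub_of_dvd h3 h3 (X ^ 6) ?_
  have e3 : B₇ ∣ X ^ 7 ^ 3 - (-2 * X ^ 7 + 2 * X ^ 3) :=
    dvd_X_pow_add_sub_of_dvd h6 e2 (X ^ 3) ?_
  have h2 : B₇ ∣ X ^ (2 * 7 ^ 3) - (3 * X ^ 6 + X ^ 2) :=
    dvd_X_pow_add_sub_of_dvd e3 e3 (-3 * X ^ 6 - 3 * X ^ 2) ?_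
  have h3 : B₇ ∣ X ^ (3 * 7 ^ 3) - (-3 * X ^ 5) :=
    dvd_X_pow_add_sub_of_dvd h2 e3 (X ^ 5) ?_
  have h6 : B₇ ∣ X ^ (6 * 7 ^ 3) - (-X ^ 6 - 3 * X ^ 2) :=
    dvd_X_pow_add_sub_of_dvd h3 h3 (2 * X ^ 2) ?_
  have e4 : B₇ ∣ X ^ 7 ^ 4 - (-X) :=
    dvd_X_pow_add_sub_of_dvd h6 e3 (2 * X ^ 5 + 3 * X) ?_
  refine irreducible_of_isCoprime_X_pow_pow_sub_X (by norm_num) natDegree_B₇ (by norm_num)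
    {3, 4} (by decide) ?_
  simp only [Finset.mem_insert, Finset.mem_singleton, forall_eq_or_imp, forall_eq]
  refine ⟨isCoprime_X_pow_sub_X_of_dvd e3 (3 * X ^ 6 + 3 * X ^ 4 + 2 * X ^ 2 + 3)
      (-2 * X ^ 7 - 2 * X ^ 5 - 2 * X ^ 3 + 3 * X) ?_,
    isCoprime_X_pow_sub_X_of_dvd e4 3 (-2 * X ^ 7 - X ^ 3) ?_⟩
  all_goals rw [← sub_eq_zero]; ring_nf <;> reduce_mod_char

theorem natDegree_A₁₇ : natDegree A₁₇ = 4 := by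
  compute_degree!

theorem irreducible_A₁₇ : Irreducible A₁₇ := by
  have e1 : A₁₇ ∣ X ^ 17 - 4 * X := Dvd.intro (X ^ 13 + 6 * X ^ 9 + 2 * X ^ 5 - 5 * X) ?_
  have h2 : A₁₇ ∣ X ^ (2 * 17) - (-X ^ 2) :=
    dvd_X_pow_add_sub_of_dvd e1 e1 0 ?_
  have h4 : A₁₇ ∣ X ^ (4 * 17) - 6 :=
    dvd_X_pow_add_sub_of_dvd h2 h2 1 ?_
  have h8 : A₁₇ ∣ X ^ (8 * 17) - 2 :=
    dvd_X_pow_add_sub_of_dvd h4 h4 0 ?_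
  have h16 : A₁₇ ∣ X ^ (16 * 17) - 4 :=
    dvd_X_pow_add_sub_of_dvd h8 h8 0 ?_
  have e2 : A₁₇ ∣ X ^ 17 ^ 2 - (-X) :=
    dvd_X_pow_add_sub_of_dvd h16 e1 0 ?_
  refine irreducible_of_isCoprime_X_pow_pow_sub_X (by norm_num) natDegree_A₁₇ (by norm_num)
    {2} (by decide) ?_
  simp only [Finset.mem_singleton, forall_eq]
  refine isCoprime_X_pow_sub_X_of_dvd e2 (-3) (7 * X ^ 3) ?_
  all_goals rw [← sub_eq_zero]; ring_nf <;> reduce_mod_char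

theorem natDegree_B₁₇ : natDegree B₁₇ = 12 := by
  compute_degree!

theorem irreducible_B₁₇ : Irreducible B₁₇ := by
  have e1 : B₁₇ ∣ X ^ 17 - (2 * X ^ 9 + 3 * X ^ 5 + X) := Dvd.intro (X ^ 5 + 6 * X) ?_
  have h2 : B₁₇ ∣ X ^ (2 * 17) - (8 * X ^ 10 + X ^ 6 + 7 * X ^ 2) :=
    dvd_X_pow_add_sub_of_dvd e1 e1 (4 * X ^ 6 + 2 * X ^ 2) ?_
  have h4 : B₁₇ ∣ X ^ (4 * 17) - (X ^ 8 + 8 * X ^ 4 + 8) :=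
    dvd_X_pow_add_sub_of_dvd h2 h2 (-4 * X ^ 8 - 8 * X ^ 4 - 3) ?_
  have h8 : B₁₇ ∣ X ^ (8 * 17) - (8 * X ^ 8 - 5 * X ^ 4 - 6) :=
    dvd_X_pow_add_sub_of_dvd h4 h4 (X ^ 4 + 5) ?_
  have h16 : B₁₇ ∣ X ^ (16 * 17) - (2 * X ^ 8 - 3 * X ^ 4 - 4) :=
    dvd_X_pow_add_sub_of_dvd h8 h8 (-4 * X ^ 4 - 2) ?_
  have e2 : B₁₇ ∣ X ^ 17 ^ 2 - (-7 * X ^ 9 - 3 * X ^ 5) :=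
    dvd_X_pow_add_sub_of_dvd h16 e1 (4 * X ^ 5 + 7 * X) ?_
  have h2 : B₁₇ ∣ X ^ (2 * 17 ^ 2) - (2 * X ^ 10 - 6 * X ^ 6 + 5 * X ^ 2) :=
    dvd_X_pow_add_sub_of_dvd e2 e2 (-2 * X ^ 6 - 4 * X ^ 2) ?_
  have h4 : B₁₇ ∣ X ^ (4 * 17 ^ 2) - (-X ^ 8 + 8 * X ^ 4 - 2) :=
    dvd_X_pow_add_sub_of_dvd h2 h2 (4 * X ^ 8 + 5) ?_
  have h8 : B₁₇ ∣ X ^ (8 * 17 ^ 2) - (8 * X ^ 8 + 5 * X ^ 4 + 8) :=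
    dvd_X_pow_add_sub_of_dvd h4 h4 (X ^ 4 + 7) ?_
  have h16 : B₁₇ ∣ X ^ (16 * 17 ^ 2) - (-4 * X ^ 8 - 6) :=
    dvd_X_pow_add_sub_of_dvd h8 h8 (-4 * X ^ 4 + 5) ?_
  have e3 : B₁₇ ∣ X ^ 17 ^ 3 - (-4 * X) :=
    dvd_X_pow_add_sub_of_dvd h16 e2 (-6 * X ^ 5 - 7 * X) ?_
  have h2 : B₁₇ ∣ X ^ (2 * 17 ^ 3) - (-X ^ 2) :=
    dvd_X_pow_add_sub_of_dvd e3 e3 0 ?_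
  have h4 : B₁₇ ∣ X ^ (4 * 17 ^ 3) - X ^ 4 :=
    dvd_X_pow_add_sub_of_dvd h2 h2 0 ?_
  have h8 : B₁₇ ∣ X ^ (8 * 17 ^ 3) - X ^ 8 :=
    dvd_X_pow_add_sub_of_dvd h4 h4 0 ?_
  have h16 : B₁₇ ∣ X ^ (16 * 17 ^ 3) - (2 * X ^ 8 + 3 * X ^ 4 + 1) :=
    dvd_X_pow_add_sub_of_dvd h8 h8 (X ^ 4 + 6) ?_
  have e4 : B₁₇ ∣ X ^ 17 ^ 4 - (-8 * X ^ 9 + 5 * X ^ 5 - 4 * X) :=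
    dvd_X_pow_add_sub_of_dvd h16 e3 0 ?_
  have h2 : B₁₇ ∣ X ^ (2 * 17 ^ 4) - (-8 * X ^ 10 - X ^ 6 - 7 * X ^ 2) :=
    dvd_X_pow_add_sub_of_dvd e4 e4 (-4 * X ^ 6 - 2 * X ^ 2) ?_
  have h4 : B₁₇ ∣ X ^ (4 * 17 ^ 4) - (X ^ 8 + 8 * X ^ 4 + 8) :=
    dvd_X_pow_add_sub_of_dvd h2 h2 (-4 * X ^ 8 - 8 * X ^ 4 - 3) ?_
  have h8 : B₁₇ ∣ X ^ (8 * 17 ^ 4) - (8 * X ^ 8 - 5 * X ^ 4 - 6) :=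
    dvd_X_pow_add_sub_of_dvd h4 h4 (X ^ 4 + 5) ?_
  have h16 : B₁₇ ∣ X ^ (16 * 17 ^ 4) - (2 * X ^ 8 - 3 * X ^ 4 - 4) :=
    dvd_X_pow_add_sub_of_dvd h8 h8 (-4 * X ^ 4 - 2) ?_
  have e5 : B₁₇ ∣ X ^ 17 ^ 5 - (-6 * X ^ 9 - 5 * X ^ 5) :=
    dvd_X_pow_add_sub_of_dvd h16 e4 (X ^ 5 + 6 * X) ?_
  have h2 : B₁₇ ∣ X ^ (2 * 17 ^ 5) - (-2 * X ^ 10 + 6 * X ^ 6 - 5 * X ^ 2) :=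
    dvd_X_pow_add_sub_of_dvd e5 e5 (2 * X ^ 6 + 4 * X ^ 2) ?_
  have h4 : B₁₇ ∣ X ^ (4 * 17 ^ 5) - (-X ^ 8 + 8 * X ^ 4 - 2) :=
    dvd_X_pow_add_sub_of_dvd h2 h2 (4 * X ^ 8 + 5) ?_
  have h8 : B₁₇ ∣ X ^ (8 * 17 ^ 5) - (8 * X ^ 8 + 5 * X ^ 4 + 8) :=
    dvd_X_pow_add_sub_of_dvd h4 h4 (X ^ 4 + 7) ?_
  have h16 : B₁₇ ∣ X ^ (16 * 17 ^ 5) - (-4 * X ^ 8 - 6) :=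
    dvd_X_pow_add_sub_of_dvd h8 h8 (-4 * X ^ 4 + 5) ?_
  have e6 : B₁₇ ∣ X ^ 17 ^ 6 - (-X) :=
    dvd_X_pow_add_sub_of_dvd h16 e5 (7 * X ^ 5 - 6 * X) ?_
  refine irreducible_of_isCoprime_X_pow_pow_sub_X (by norm_num) natDegree_B₁₇ (by norm_num)
    {4, 5, 6} (by decide) ?_
  simp only [Finset.mem_insert, Finset.mem_singleton, forall_eq_or_imp, forall_eq]
  refine ⟨isCoprime_X_pow_sub_X_of_dvd e4 (-4 * X ^ 8 - 6 * X ^ 4 - 6)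
      (8 * X ^ 11 + 3 * X ^ 7 + 7 * X ^ 3) ?_,
    isCoprime_X_pow_sub_X_of_dvd e5 (-5 * X ^ 8 + 5 * X ^ 4 - 6)
      (2 * X ^ 11 + 7 * X ^ 7 + 2 * X ^ 3) ?_,
    isCoprime_X_pow_sub_X_of_dvd e6 (-6) (-3 * X ^ 11 + X ^ 7) ?_⟩
  all_goals rw [← sub_eq_zero]; ring_nf <;> reduce_mod_char

noncomputable def w : ℤ[X] := 256 * X ^ 4 - 80 * X ^ 3 - 32 * X ^ 2 - 20 * X + 1

theorem map_w_rat :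
    w.map (Int.castRingHom ℚ) = 256 * X ^ 4 - 80 * X ^ 3 - 32 * X ^ 2 - 20 * X + 1 := by
  simp [w]

theorem w_comp_X_pow_four :
    w.comp (X ^ 4) = 256 * X ^ 16 - 80 * X ^ 12 - 32 * X ^ 8 - 20 * X ^ 4 + 1 := by
  simp only [w, sub_comp, add_comp, mul_comp, pow_comp, X_comp, ofNat_comp, one_comp]
  ring

theorem natDegree_w_comp_X_pow_four : (w.comp (X ^ 4)).natDegree = 16 := by
  rw [w_comp_X_pow_four]
  compute_degree!

theorem leadingCoeff_w_comp_X_pow_four : (w.comp (X ^ 4)).leadingCoeff = 256 := by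
  rw [leadingCoeff, natDegree_w_comp_X_pow_four, w_comp_X_pow_four]
  simp [coeff_X_pow, coeff_one]

theorem castRingHom_leadingCoeff_w_comp_X_pow_four_ne_zero {p : ℕ} (hp : ¬(p : ℤ) ∣ 256) :
    Int.castRingHom (ZMod p) (w.comp (X ^ 4)).leadingCoeff ≠ 0 := by
  rwa [leadingCoeff_w_comp_X_pow_four, eq_intCast, Ne, ZMod.intCast_zmod_eq_zero_iff_dvd]

theorem isPrimitive_w_comp_X_pow_four : (w.comp (X ^ 4)).IsPrimitive :=
  isPrimitive_of_isUnit_coeff (n := 0) (by simp [w_comp_X_pow_four])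

theorem map_w_comp_X_pow_four_zmod_seven :
    (w.comp (X ^ 4)).map (Int.castRingHom (ZMod 7)) = A₇ * B₇ := by
  rw [w_comp_X_pow_four, ← sub_eq_zero]
  simp only [Polynomial.map_add, Polynomial.map_sub, Polynomial.map_mul, Polynomial.map_pow,
    map_X, Polynomial.map_ofNat, Polynomial.map_one]
  ring_nf
  reduce_mod_char

theorem map_w_comp_X_pow_four_zmod_seventeen :
    (w.comp (X ^ 4)).map (Int.castRingHom (ZMod 17)) = A₁₇ * B₁₇ := by
  rw [w_comp_X_pow_four, ← sub_eq_zero]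
  simp only [Polynomial.map_add, Polynomial.map_sub, Polynomial.map_mul, Polynomial.map_pow,
    map_X, Polynomial.map_ofNat, Polynomial.map_one]
  ring_nf
  reduce_mod_char

theorem irreducible_w_comp_X_pow_four : Irreducible (w.comp (X ^ 4)) := by
  have : Fact (Nat.Prime 7) := ⟨by norm_num⟩
  have : Fact (Nat.Prime 17) := ⟨by norm_num⟩
  refine isPrimitive_w_comp_X_pow_four.irreducible_of_forall_dvd
    (by rw [natDegree_w_comp_X_pow_four]; norm_num) fun g hg => ?_
  have h7 := natDegree_eq_of_dvd_of_map_eq_mul _ irreducible_A₇ irreducible_B₇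
    map_w_comp_X_pow_four_zmod_seven
    (castRingHom_leadingCoeff_w_comp_X_pow_four_ne_zero (by norm_num)) hg
  have h17 := natDegree_eq_of_dvd_of_map_eq_mul _ irreducible_A₁₇ irreducible_B₁₇
    map_w_comp_X_pow_four_zmod_seventeen
    (castRingHom_leadingCoeff_w_comp_X_pow_four_ne_zero (by norm_num)) hg
  rw [natDegree_A₇, natDegree_B₇] at h7
  rw [natDegree_A₁₇, natDegree_B₁₇] at h17
  rw [natDegree_w_comp_X_pow_four]
  omega

theorem stmt_11 :
    Irreducible ((256 * X ^ 4 - 80 * X ^ 3 - 32 * X ^ 2 - 20 * X + 1 : ℚ[X]).comp (X ^ 2)) ∧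
    Irreducible ((256 * X ^ 4 - 80 * X ^ 3 - 32 * X ^ 2 - 20 * X + 1 : ℚ[X]).comp (X ^ 4)) := by
  have h4 := (IsPrimitive.Int.irreducible_iff_irreducible_map_cast
    isPrimitive_w_comp_X_pow_four).mp irreducible_w_comp_X_pow_four
  rw [Polynomial.map_comp, map_w_rat, Polynomial.map_pow, map_X] at h4
  refine ⟨irreducible_of_irreducible_comp (q := X ^ 2) ?_ (by simp), h4⟩
  rwa [comp_assoc, X_pow_comp, ← pow_mul]
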